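/- arXiv:cs/9901012 — 5 statements merged into one kernel-verified Lean document; each statement's English description precedes it below -/
import Mathlib

section
/- Define s0(n) as above. For all integers x, y with x, y ≥ 2, max(x,y) > 2, and max(x,y) < n, we have s0(n) > s0(n−x) + s0(n−y). -/
def s0 : ℕ → ℕ
  | 0 => 1
  | 1 => 1
  | 2 => 2
  | n =>
    if n % 3 = 0 then 3 * 3 ^ (n / 3 - 1)
    else if n % 3 = 1 then 4 * 3 ^ (n / 3 - 1)
    else 6 * 3 ^ (n / 3 - 1)

lemma s0_step : ∀ n : ℕ, 2 ≤ n → s0 (n + 3) = 3 * s0 n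
  | 2, _ => rfl
  | (m+3), _ => by
    show (if (m+6) % 3 = 0 then 3 * 3 ^ ((m+6) / 3 - 1)
      else if (m+6) % 3 = 1 then 4 * 3 ^ ((m+6) / 3 - 1)
      else 6 * 3 ^ ((m+6) / 3 - 1)) = 3 *
      (if (m+3) % 3 = 0 then 3 * 3 ^ ((m+3) / 3 - 1)
      else if (m+3) % 3 = 1 then 4 * 3 ^ ((m+3) / 3 - 1)
      else 6 * 3 ^ ((m+3) / 3 - 1))
    have h1 : (m+6) % 3 = (m+3) % 3 := by omega
    have h2 : (m+6) / 3 - 1 = ((m+3) / 3 - 1) + 1 := by omega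
    rw [h1, h2]
    split <;> [skip; split] <;> ring

lemma s0_le_succ : ∀ n : ℕ, s0 n ≤ s0 (n + 1) := by
  intro n
  induction n using Nat.strong_induction_on with
  | _ n ih =>
    match n with
    | 0 => decide
    | 1 => decide
    | 2 => decide
    | 3 => decide
    | 4 => decide
    | (m+5) =>
      have h1 : s0 (m+6) = 3 * s0 (m+3) := s0_step _ (by omega)
      have h2 : s0 (m+5) = 3 * s0 (m+2) := s0_step _ (by omega)
      have h4 : s0 (m+2) ≤ s0 (m+3) := ih (m+2) (by omega)
      show s0 (m+5) ≤ s0 (m+6)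
      omega

lemma s0_mono : Monotone s0 := monotone_nat_of_le_succ s0_le_succ

lemma s0_key : ∀ n : ℕ, 4 ≤ n → s0 (n - 2) + s0 (n - 3) < s0 n := by
  intro n
  induction n using Nat.strong_induction_on with
  | _ n ih =>
    intro hn
    match n, hn with
    | 4, _ => decide
    | 5, _ => decide
    | 6, _ => decide
    | 7, _ => decide
    | (m+8), _ =>
      have h1 : s0 (m+8) = 3 * s0 (m+5) := s0_step _ (by omega)
      have h2 : s0 (m+6) = 3 * s0 (m+3) := s0_step _ (by omega)
      have h3 : s0 (m+5) = 3 * s0 (m+2) := s0_step _ (by omega)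
      have := ih (m+5) (by omega) (by omega)
      simp only [show m+5-2 = m+3 from rfl, show m+5-3 = m+2 from rfl] at this
      show s0 (m+6) + s0 (m+5) < s0 (m+8)
      omega

theorem s0_strict_two_splits (n x y : ℕ) (hx : 2 ≤ x) (hy : 2 ≤ y)
    (hmax : 2 < max x y) (hlt : max x y < n) :
    s0 (n - x) + s0 (n - y) < s0 n := by
  have hn : 4 ≤ n := by omega
  have key := s0_key n hn
  rcases le_total x y with h | h
  · have hy3 : 3 ≤ y := by omega
    have e1 : s0 (n - x) ≤ s0 (n - 2) := s0_mono (by omega)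
    have e2 : s0 (n - y) ≤ s0 (n - 3) := s0_mono (by omega)
    omega
  · have hx3 : 3 ≤ x := by omega
    have e1 : s0 (n - x) ≤ s0 (n - 3) := s0_mono (by omega)
    have e2 : s0 (n - y) ≤ s0 (n - 2) := s0_mono (by omega)
    omega
end

section
/- Define s0(n) as above. For every n ≥ 5, s0(n) ≥ s0(n−1) + s0(n−4), with equality if and only if n ≡ 1 (mod 3). -/
/-! On each residue class mod 3, `s0` is `3 ^ m` times a constant; in units of `3 ^ m` the
inequality reads `6 + 2 < 9` for `n = 3m + 6` and `9 + 3 = 12` for `n = 3m + 7`, while for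
`n = 3m + 5` it reads `4 * 3 ^ m + s0 (3m + 1) < 6 * 3 ^ m`, true since `s0 (3m + 1) < 2 * 3 ^ m`. -/

lemma s0_three_mul_add_three (m : ℕ) : s0 (3 * m + 3) = 3 ^ (m + 1) := by
  simp [s0, pow_succ, mul_comm]

lemma s0_three_mul_add_four (m : ℕ) : s0 (3 * m + 4) = 4 * 3 ^ m := by
  have hmod : (3 * m + 4) % 3 = 1 := by omega
  have hdiv : (3 * m + 4) / 3 = m + 1 := by omega
  simp [s0, hmod, hdiv]

lemma s0_three_mul_add_five (m : ℕ) : s0 (3 * m + 5) = 6 * 3 ^ m := by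
  have hmod : (3 * m + 5) % 3 = 2 := by omega
  have hdiv : (3 * m + 5) / 3 = m + 1 := by omega
  simp [s0, hmod, hdiv]

lemma s0_three_mul_add_two (m : ℕ) : s0 (3 * m + 2) = 2 * 3 ^ m := by
  cases m with
  | zero => rfl
  | succ m => rw [show 3 * (m + 1) + 2 = 3 * m + 5 by ring, s0_three_mul_add_five, pow_succ]; ring

lemma s0_three_mul_add_one_lt (m : ℕ) : s0 (3 * m + 1) < 2 * 3 ^ m := by
  cases m with
  | zero => decide
  | succ m =>
    rw [show 3 * (m + 1) + 1 = 3 * m + 4 by ring, s0_three_mul_add_four, pow_succ]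
    have : 0 < 3 ^ m := by positivity
    omega

lemma s0_add_lt_three_mul_add_five (m : ℕ) : s0 (3 * m + 4) + s0 (3 * m + 1) < s0 (3 * m + 5) := by
  rw [s0_three_mul_add_four, s0_three_mul_add_five]
  linarith [s0_three_mul_add_one_lt m]

lemma s0_add_lt_three_mul_add_six (m : ℕ) : s0 (3 * m + 5) + s0 (3 * m + 2) < s0 (3 * m + 6) := by
  rw [s0_three_mul_add_five, s0_three_mul_add_two, show 3 * m + 6 = 3 * (m + 1) + 3 by ring,
    s0_three_mul_add_three, pow_succ, pow_succ]
  have : 0 < 3 ^ m := by positivity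
  omega

lemma s0_add_eq_three_mul_add_seven (m : ℕ) : s0 (3 * m + 6) + s0 (3 * m + 3) = s0 (3 * m + 7) := by
  rw [show 3 * m + 6 = 3 * (m + 1) + 3 by ring, show 3 * m + 7 = 3 * (m + 1) + 4 by ring,
    s0_three_mul_add_three, s0_three_mul_add_three, s0_three_mul_add_four, pow_succ, pow_succ]
  ring

theorem s0_one_four_step (n : ℕ) (hn : 5 ≤ n) :
    s0 (n - 1) + s0 (n - 4) ≤ s0 n ∧
      (s0 n = s0 (n - 1) + s0 (n - 4) ↔ n % 3 = 1) := by
  obtain ⟨m, rfl | rfl | rfl⟩ : ∃ m, n = 3 * m + 5 ∨ n = 3 * m + 6 ∨ n = 3 * m + 7 :=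
    ⟨(n - 5) / 3, by omega⟩
  · have h := s0_add_lt_three_mul_add_five m
    exact ⟨h.le, iff_of_false h.ne' (by omega)⟩
  · have h := s0_add_lt_three_mul_add_six m
    exact ⟨h.le, iff_of_false h.ne' (by omega)⟩
  · have h := s0_add_eq_three_mul_add_seven m
    exact ⟨h.le, iff_of_true h.symm (by omega)⟩
end

section
/- Define s0(n) as above. For every integer x with 4 < x < n, s0(n) > s0(n−1) + s0(n−x). -/
lemma s0_3 (k : ℕ) : s0 (3*k+3) = 3 * 3 ^ k := by
  have h0 : (3*k+3) % 3 = 0 := by omega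
  have h1 : (3*k+3) / 3 = k + 1 := by omega
  simp [s0, h0, h1]

lemma s0_4 (k : ℕ) : s0 (3*k+4) = 4 * 3 ^ k := by
  have h0 : (3*k+4) % 3 = 1 := by omega
  have h1 : (3*k+4) / 3 = k + 1 := by omega
  simp [s0, h0, h1]

lemma s0_5 (k : ℕ) : s0 (3*k+5) = 6 * 3 ^ k := by
  have h0 : (3*k+5) % 3 = 2 := by omega
  have h1 : (3*k+5) / 3 = k + 1 := by omega
  simp [s0, h0, h1]

lemma s0_cases (m : ℕ) (h : 3 ≤ m) : ∃ k, m = 3*k+3 ∨ m = 3*k+4 ∨ m = 3*k+5 := by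
  refine ⟨(m-3)/3, ?_⟩
  omega

lemma s0_B (n : ℕ) (h : 3 ≤ n) : 4 * s0 (n-1) ≤ 3 * s0 n := by
  obtain ⟨k, h | h | h⟩ := s0_cases n h <;> subst h
  · have h2 : 3*k+3-1 = 3*k+2 := by omega
    rw [h2, s0_3]
    match k with
    | 0 => norm_num [s0]
    | (j+1) =>
      have : 3*(j+1)+2 = 3*j+5 := by omega
      rw [this, s0_5, pow_succ]
      nlinarith [pow_pos (by norm_num : (0:ℕ) < 3) j]
  · have h2 : 3*k+4-1 = 3*k+3 := by omega
    rw [h2, s0_3, s0_4]; nlinarith [pow_pos (by norm_num : (0:ℕ) < 3) k]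
  · have h2 : 3*k+5-1 = 3*k+4 := by omega
    rw [h2, s0_4, s0_5]; nlinarith [pow_pos (by norm_num : (0:ℕ) < 3) k]

lemma s0_C (n : ℕ) (h : 6 ≤ n) : 4 * s0 (n-5) < s0 n := by
  obtain ⟨k, h' | h' | h'⟩ := s0_cases n (by omega) <;> subst h'
  · -- n = 3k+3, k ≥ 1; n-5 = 3(k-1)+1
    match k with
    | 0 => omega
    | (j+1) =>
      have h2 : 3*(j+1)+3-5 = 3*j+1 := by omega
      rw [h2, s0_3, pow_succ]
      match j with
      | 0 => norm_num [s0]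
      | (i+1) =>
        have : 3*(i+1)+1 = 3*i+4 := by omega
        rw [this, s0_4, pow_succ]
        nlinarith [pow_pos (by norm_num : (0:ℕ) < 3) i]
  · -- n = 3k+4, k ≥ 1; n-5 = 3(k-1)+2
    match k with
    | 0 => omega
    | (j+1) =>
      have h2 : 3*(j+1)+4-5 = 3*j+2 := by omega
      rw [h2, s0_4, pow_succ]
      match j with
      | 0 => norm_num [s0]
      | (i+1) =>
        have : 3*(i+1)+2 = 3*i+5 := by omega
        rw [this, s0_5, pow_succ]
        nlinarith [pow_pos (by norm_num : (0:ℕ) < 3) i]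
  · -- n = 3k+5, n-5 = 3k
    match k with
    | 0 => norm_num [s0]
    | (j+1) =>
      have h2 : 3*(j+1)+5-5 = 3*j+3 := by omega
      rw [h2, s0_3, s0_5, pow_succ]
      nlinarith [pow_pos (by norm_num : (0:ℕ) < 3) j]

theorem s0_one_x_step (n x : ℕ) (h4 : 4 < x) (hxn : x < n) :
    s0 (n - 1) + s0 (n - x) < s0 n := by
  have hn : 6 ≤ n := by omega
  have hB := s0_B n (by omega)
  have hC := s0_C n hn
  have hM : s0 (n - x) ≤ s0 (n - 5) := s0_mono (by omega)
  omega
end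

section
/- Among all triples (λ2, λ3, λ4) of natural numbers satisfying 2λ2 + 3λ3 + 4λ4 = n, the maximum value of 2^λ2 · 3^λ3 · 4^λ4 equals s0(n), for every n ≥ 2. -/
lemma s0_eq (m : ℕ) : s0 (m+3) =
    if (m+3) % 3 = 0 then 3 * 3 ^ ((m+3) / 3 - 1)
    else if (m+3) % 3 = 1 then 4 * 3 ^ ((m+3) / 3 - 1)
    else 6 * 3 ^ ((m+3) / 3 - 1) := rfl

lemma s0_3k (k : ℕ) (hk : 1 ≤ k) : s0 (3*k) = 3^k := by
  obtain ⟨j, rfl⟩ : ∃ j, k = j + 1 := ⟨k - 1, by omega⟩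
  have h : 3*(j+1) = 3*j + 3 := by ring
  rw [h, s0_eq]
  have h1 : (3*j+3) % 3 = 0 := by omega
  have h2 : (3*j+3) / 3 - 1 = j := by omega
  rw [h1, h2]
  simp [pow_succ, mul_comm]

lemma s0_3k1 (k : ℕ) (hk : 1 ≤ k) : s0 (3*k+1) = 4*3^(k-1) := by
  obtain ⟨j, rfl⟩ : ∃ j, k = j + 1 := ⟨k - 1, by omega⟩
  have h : 3*(j+1)+1 = (3*j+1) + 3 := by ring
  rw [h, s0_eq]
  have h1 : (3*j+1+3) % 3 = 1 := by omega
  have h0 : ¬ (3*j+1+3) % 3 = 0 := by omega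
  have h2 : (3*j+1+3) / 3 - 1 = j := by omega
  rw [if_neg h0, if_pos h1, h2]
  simp

lemma s0_3k2 (k : ℕ) : s0 (3*k+2) = 2*3^k := by
  cases k with
  | zero => rfl
  | succ j =>
    have h : 3*(j+1)+2 = (3*j+2) + 3 := by ring
    rw [h, s0_eq]
    have h0 : ¬ (3*j+2+3) % 3 = 0 := by omega
    have h1 : ¬ (3*j+2+3) % 3 = 1 := by omega
    have h2 : (3*j+2+3) / 3 - 1 = j := by omega
    rw [if_neg h0, if_neg h1, h2]
    ring

lemma key : ∀ a b : ℕ, 2 ≤ 2*a+3*b → 2^a*3^b ≤ s0 (2*a+3*b) := by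
  intro a
  induction a using Nat.strong_induction_on with
  | _ a ih =>
    match a with
    | 0 =>
      intro b hb
      have hb1 : 1 ≤ b := by omega
      have h : 2*0+3*b = 3*b := by ring
      rw [h, s0_3k b hb1]
      simp
    | 1 =>
      intro b hb
      cases b with
      | zero => rfl
      | succ j =>
        have h : 2*1+3*(j+1) = 3*(j+1)+2 := by ring
        rw [h, s0_3k2]
        ring_nf
        omega
    | 2 =>
      intro b hb
      have h : 2*2+3*b = 3*(b+1)+1 := by ring
      rw [h, s0_3k1 (b+1) (by omega)]
      simp
    | (a+3) =>
      intro b hb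
      have h : 2*(a+3)+3*b = 2*a+3*(b+2) := by ring
      rw [h]
      calc 2^(a+3)*3^b = 8*(2^a*3^b) := by ring
        _ ≤ 9*(2^a*3^b) := by nlinarith [pow_pos (by norm_num : 0 < 2) a, pow_pos (by norm_num : 0 < 3) b]
        _ = 2^a*3^(b+2) := by ring
        _ ≤ s0 (2*a+3*(b+2)) := ih a (by omega) (b+2) (by omega)

/-- The maximum of 2^λ2·3^λ3·4^λ4 over triples with 2λ2+3λ3+4λ4 = n equals s0(n). -/
theorem max_signature_value (n : ℕ) (hn : 2 ≤ n) :
    IsGreatest {v : ℕ | ∃ l2 l3 l4 : ℕ,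
      2 * l2 + 3 * l3 + 4 * l4 = n ∧ v = 2 ^ l2 * 3 ^ l3 * 4 ^ l4} (s0 n) := by
  constructor
  · -- membership
    obtain ⟨k, r, hr, rfl⟩ : ∃ k r, r < 3 ∧ n = 3*k + r :=
      ⟨n / 3, n % 3, Nat.mod_lt _ (by norm_num), by omega⟩
    interval_cases r
    · refine ⟨0, k, 0, by ring, ?_⟩
      rw [show 3*k+0 = 3*k from by ring, s0_3k k (by omega)]
      ring
    · have hk : 1 ≤ k := by omega
      obtain ⟨j, rfl⟩ : ∃ j, k = j + 1 := ⟨k - 1, by omega⟩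
      refine ⟨0, j, 1, by ring, ?_⟩
      rw [s0_3k1 (j+1) (by omega)]
      simp
      ring
    · refine ⟨1, k, 0, by ring, ?_⟩
      rw [s0_3k2]
      ring
  · -- upper bound
    rintro v ⟨l2, l3, l4, hsum, rfl⟩
    have h4 : (4:ℕ)^l4 = 2^(2*l4) := by rw [pow_mul]; norm_num
    have hv : 2^l2 * 3^l3 * 4^l4 = 2^(l2+2*l4) * 3^l3 := by rw [h4]; ring
    have hn' : n = 2*(l2+2*l4) + 3*l3 := by omega
    rw [hv, hn']
    exact key _ _ (by omega)
end

section
/- Let D be a disjunctive program all of whose rules have empty bodies, with n rules d₁,…,d_n where dᵢ has exactly hᵢ distinct atoms in its head. Then the number of minimal models of D is at most h₁·h₂·…·h_n; moreover, equality holds if and only if no atom appears in more than one rule of D. -/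
/-- M is a transversal of the family H: it meets every member. -/
def IsTransversal {n : ℕ} (H : Fin n → Finset ℕ) (M : Set ℕ) : Prop :=
  ∀ i, ∃ a ∈ H i, a ∈ M

/-- M is a minimal transversal of H. -/
def IsMinTransversal {n : ℕ} (H : Fin n → Finset ℕ) (M : Set ℕ) : Prop :=
  IsTransversal H M ∧ ∀ N : Set ℕ, N ⊆ M → IsTransversal H N → N = M

section Aux

variable {n : ℕ} (H : Fin n → Finset ℕ)

/-- The type of choice functions for the family `H`. -/
abbrev ChoiceFun := ∀ i : Fin n, {x // x ∈ H i}

/-- The range of a choice function, as a set of atoms. -/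
def crange (f : ChoiceFun H) : Set ℕ := Set.range fun i => (f i : ℕ)

lemma crange_transversal (f : ChoiceFun H) : IsTransversal H (crange H f) :=
  fun i => ⟨f i, (f i).2, ⟨i, rfl⟩⟩

lemma min_eq_crange {M : Set ℕ} (h : IsMinTransversal H M) (f : ChoiceFun H)
    (hf : ∀ i, (f i : ℕ) ∈ M) : crange H f = M :=
  h.2 _ (by rintro x ⟨i, rfl⟩; exact hf i) (crange_transversal H f)

/-- A choice function selecting, for each `i`, an element of `H i ∩ M`. -/
noncomputable def pick {M : Set ℕ} (h : IsMinTransversal H M) : ChoiceFun H :=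
  fun i => ⟨(h.1 i).choose, (h.1 i).choose_spec.1⟩

lemma pick_mem {M : Set ℕ} (h : IsMinTransversal H M) (i : Fin n) :
    ((pick H h i : ℕ)) ∈ M := (h.1 i).choose_spec.2

lemma crange_pick {M : Set ℕ} (h : IsMinTransversal H M) :
    crange H (pick H h) = M :=
  min_eq_crange H h _ (pick_mem H h)

/-- The injection from minimal transversals into choice functions. -/
noncomputable def psi : {M : Set ℕ | IsMinTransversal H M} → ChoiceFun H :=
  fun x => pick H x.2

lemma psi_inj : Function.Injective (psi H) := by
  rintro ⟨M, hM⟩ ⟨N, hN⟩ hE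
  have h1 : pick H hM = pick H hN := hE
  have : M = N := by
    rw [← crange_pick H hM, ← crange_pick H hN, h1]
  exact Subtype.ext this

lemma psi_surj (hdisj : Pairwise (Function.onFun Disjoint H)) :
    Function.Surjective (psi H) := by
  intro f
  have hkey : ∀ (g : ChoiceFun H) (m i : Fin n), ((g m : ℕ)) ∈ H i → m = i := by
    intro g m i hmem
    by_contra hne'
    exact Finset.disjoint_left.mp (hdisj hne') (g m).2 hmem
  have hmin : IsMinTransversal H (crange H f) := by
    refine ⟨crange_transversal H f, ?_⟩
    intro N hsub htr
    refine Set.Subset.antisymm hsub ?_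
    rintro x ⟨i, rfl⟩
    obtain ⟨a, haH, haN⟩ := htr i
    obtain ⟨m, hm⟩ := hsub haN
    have hm' : (f m : ℕ) = a := hm
    have hmi : m = i := hkey f m i (by rw [hm']; exact haH)
    subst hmi
    show (f m : ℕ) ∈ N
    rw [hm']; exact haN
  refine ⟨⟨crange H f, hmin⟩, ?_⟩
  funext i
  apply Subtype.ext
  obtain ⟨m, hm⟩ := pick_mem H hmin i
  have hm' : (f m : ℕ) = (pick H hmin i : ℕ) := hm
  have hmi : m = i := hkey f m i (by rw [hm']; exact (pick H hmin i).2)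
  subst hmi
  exact hm'.symm

lemma crange_min_of_surj (hsurj : Function.Surjective (psi H)) (f : ChoiceFun H) :
    IsMinTransversal H (crange H f) := by
  obtain ⟨⟨M, hM⟩, hx⟩ := hsurj f
  have h1 : pick H hM = f := hx
  have h2 : crange H f = M := by rw [← h1, crange_pick H hM]
  rw [h2]; exact hM

lemma crange_inj_of_surj (hsurj : Function.Surjective (psi H)) {f g : ChoiceFun H}
    (h : crange H f = crange H g) : f = g := by
  obtain ⟨⟨M, hM⟩, hx⟩ := hsurj f
  obtain ⟨⟨N, hN⟩, hy⟩ := hsurj g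
  have h1 : pick H hM = f := hx
  have h2 : pick H hN = g := hy
  have hMf : M = crange H f := by rw [← h1, crange_pick H hM]
  have hNg : N = crange H g := by rw [← h2, crange_pick H hN]
  have hMN : M = N := by rw [hMf, hNg, h]
  have : (⟨M, hM⟩ : {M : Set ℕ | IsMinTransversal H M}) = ⟨N, hN⟩ :=
    Subtype.ext hMN
  rw [← h1, ← h2]
  exact congrArg (psi H) this

lemma keyB (hsurj : Function.Surjective (psi H)) {i j : Fin n} (hij : i ≠ j)
    {a b : ℕ} (hai : a ∈ H i) (haj : a ∈ H j) (hbj : b ∈ H j) (hab : b ≠ a)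
    (c : ChoiceFun H) : False := by
  classical
  let f : ChoiceFun H := fun k =>
    if h : k = i then ⟨a, by rw [h]; exact hai⟩
    else if h' : k = j then ⟨a, by rw [h']; exact haj⟩ else c k
  let g : ChoiceFun H := fun k =>
    if h : k = i then ⟨a, by rw [h]; exact hai⟩
    else if h' : k = j then ⟨b, by rw [h']; exact hbj⟩ else c k
  have hji : j ≠ i := hij.symm
  have hgi : (g i : ℕ) = a := by simp [g]
  have hsub : crange H f ⊆ crange H g := by
    rintro x ⟨k, rfl⟩
    by_cases h : k = i
    · exact ⟨i, by simp [f, hgi, h]⟩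
    · by_cases h' : k = j
      · exact ⟨i, by simp [f, hgi, h, h', hji]⟩
      · exact ⟨k, by simp [f, g, h, h']⟩
  have hming := crange_min_of_surj H hsurj g
  have hfg : crange H f = crange H g :=
    hming.2 _ hsub (crange_transversal H f)
  have heq : f = g := crange_inj_of_surj H hsurj hfg
  have : (f j : ℕ) = (g j : ℕ) := by rw [heq]
  simp [f, g, hji] at this
  exact hab this.symm

end Aux

/-- For a disjunctive program of n distinct empty-body rules with heads H i, the
number of minimal models (= minimal transversals) is at most ∏ |H i|, with
equality iff no atom appears in two rules (the heads are pairwise disjoint). -/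
theorem minimal_models_empty_bodies (n : ℕ) (H : Fin n → Finset ℕ)
    (hne : ∀ i, (H i).Nonempty) (hinj : Function.Injective H) :
    {M : Set ℕ | IsMinTransversal H M}.ncard ≤ ∏ i, (H i).card ∧
    ({M : Set ℕ | IsMinTransversal H M}.ncard = ∏ i, (H i).card ↔
      Pairwise (Function.onFun Disjoint H)) := by
  classical
  have hinjψ := psi_inj H
  have hcardF : Nat.card (ChoiceFun H) = ∏ i, (H i).card := by
    rw [Nat.card_eq_fintype_card, Fintype.card_pi]
    simp [Fintype.card_coe]
  have hle : {M : Set ℕ | IsMinTransversal H M}.ncard ≤ ∏ i, (H i).card := by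
    rw [← Nat.card_coe_set_eq, ← hcardF]
    exact Nat.card_le_card_of_injective _ hinjψ
  refine ⟨hle, ?_, ?_⟩
  · -- equality → disjoint
    intro heq
    have hcard : Nat.card {M : Set ℕ | IsMinTransversal H M} =
        Nat.card (ChoiceFun H) := by
      rw [Nat.card_coe_set_eq, heq, hcardF]
    have hbij : Function.Bijective (psi H) :=
      (Nat.bijective_iff_injective_and_card _).mpr ⟨hinjψ, hcard⟩
    have hsurj := hbij.2
    set c : ChoiceFun H := fun k => ⟨(hne k).choose, (hne k).choose_spec⟩ with hc
    intro i j hij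
    rw [Function.onFun, Finset.disjoint_left]
    intro a hai haj
    by_cases hj : ∀ b ∈ H j, b = a
    · by_cases hi : ∀ b ∈ H i, b = a
      · have hHi : H i = {a} := Finset.eq_singleton_iff_unique_mem.mpr ⟨hai, hi⟩
        have hHj : H j = {a} := Finset.eq_singleton_iff_unique_mem.mpr ⟨haj, hj⟩
        exact hij (hinj (hHi.trans hHj.symm))
      · push_neg at hi
        obtain ⟨b, hbi, hba⟩ := hi
        exact keyB H hsurj hij.symm haj hai hbi hba c
    · push_neg at hj
      obtain ⟨b, hbj, hba⟩ := hj
      exact keyB H hsurj hij hai haj hbj hba c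
  · -- disjoint → equality
    intro hdisj
    rw [← Nat.card_coe_set_eq, ← hcardF]
    exact Nat.card_eq_of_bijective _ ⟨hinjψ, psi_surj H hdisj⟩
end
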